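/- Let f : A → A be a homeomorphism of the closed annulus isotopic to the identity with lift F, and X ⊆ A a compact f-invariant set. If the rotation set ρ(F,X) (the set of all rotation numbers ρ(F,z) of points z ∈ X for which the limit exists) is a singleton {α}, then every point of X has well-defined rotation number α, and the convergence of (pr₁(Fⁿ(z̃)) − pr₁(z̃))/n to α is uniform over lifts z̃ of points of X. -/

import Mathlib

open Filter Topology

/-- The lifted annulus `𝒜 = ℝ × [0,1]`. -/
abbrev 𝒜 : Type := ℝ × (Set.Icc (0:ℝ) 1)

/-- The closed annulus `A = S¹ × [0,1]`. -/
abbrev Ann : Type := AddCircle (1:ℝ) × (Set.Icc (0:ℝ) 1)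

/-- The universal covering map `π : ℝ × [0,1] → S¹ × [0,1]`. -/
noncomputable def cov : 𝒜 → Ann := fun z => ((z.1 : AddCircle (1:ℝ)), z.2)

/-- The deck translation `T(x,y) = (x+1,y)`. -/
def T : 𝒜 → 𝒜 := fun z => (z.1 + 1, z.2)

/-!
The displacement `S n z = pr₁ (Fⁿ z) - pr₁ z` is an additive cocycle over `F`, invariant under
deck translations, so on lifts of `X` it takes only values it takes on the compact fundamental
domain `K`. Its maxima `M n` are subadditive, so `M n / n → β`. Compactness gives a lift `z` with
`S n z ≥ n β` for all `n`: otherwise, for some horizon `n`, every orbit would drop by a uniform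
`δ > 0` below `m β` at some time `m ≤ n`, and concatenating such drops forces `M N < N β` for
large `N`. This `z` has rotation number `β`, so `β = α`, and `S n / n ≤ M n / n` is the uniform
upper bound. The lower bound is the same argument for `-S`.
-/

open Set

section Representatives

variable {Z : Type*} {S : ℕ → Z → ℝ} {Y K : Set Z}

theorem image_eq_of_reps (hKY : K ⊆ Y) (hrep : ∀ z ∈ Y, ∃ w ∈ K, ∀ n, S n w = S n z) (n : ℕ) :
    S n '' K = S n '' Y := by
  refine (image_mono hKY).antisymm ?_
  rintro _ ⟨z, hz, rfl⟩
  obtain ⟨w, hw, hwz⟩ := hrep z hz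
  exact ⟨w, hw, hwz n⟩

variable [TopologicalSpace Z]

theorem bddAbove_image_of_reps (hSc : ∀ n, Continuous (S n)) (hK : IsCompact K) (hKY : K ⊆ Y)
    (hrep : ∀ z ∈ Y, ∃ w ∈ K, ∀ n, S n w = S n z) (n : ℕ) : BddAbove (S n '' Y) :=
  image_eq_of_reps hKY hrep n ▸ hK.bddAbove_image (hSc n).continuousOn

theorem bddBelow_image_of_reps (hSc : ∀ n, Continuous (S n)) (hK : IsCompact K) (hKY : K ⊆ Y)
    (hrep : ∀ z ∈ Y, ∃ w ∈ K, ∀ n, S n w = S n z) (n : ℕ) : BddBelow (S n '' Y) :=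
  image_eq_of_reps hKY hrep n ▸ hK.bddBelow_image (hSc n).continuousOn

theorem exists_pos_forall_exists_le_neg (hSc : ∀ n, Continuous (S n)) (hK : IsCompact K)
    (hKne : K.Nonempty) (hrep : ∀ z ∈ Y, ∃ w ∈ K, ∀ n, S n w = S n z) {n : ℕ}
    (hneg : ∀ z ∈ K, ∃ m ≤ n, S m z < 0) : ∃ δ > 0, ∀ z ∈ Y, ∃ m ≤ n, S m z ≤ -δ := by
  set h : Z → ℝ := fun z => (Finset.range (n + 1)).inf' Finset.nonempty_range_add_one (S · z)
  have hh : Continuous h := Continuous.finset_inf'_apply _ fun m _ => hSc m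
  obtain ⟨w₀, hw₀, hmax⟩ := hK.exists_isMaxOn hKne hh.continuousOn
  refine ⟨-h w₀, ?_, fun z hz => ?_⟩
  · obtain ⟨m, hm, hlt⟩ := hneg w₀ hw₀
    linarith [Finset.inf'_le (fun m => S m w₀) (Finset.mem_range_succ_iff.2 hm)]
  · obtain ⟨w, hw, hwz⟩ := hrep z hz
    obtain ⟨m, hm, hmeq⟩ := Finset.exists_mem_eq_inf' Finset.nonempty_range_add_one (S · w)
    refine ⟨m, Finset.mem_range_succ_iff.1 hm, ?_⟩
    rw [← hwz m, ← hmeq, neg_neg]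
    exact hmax hw

end Representatives

def IsAddCocycle {Z : Type*} (g : Z → Z) (S : ℕ → Z → ℝ) : Prop :=
  ∀ m n z, S (m + n) z = S m z + S n (g^[m] z)

namespace IsAddCocycle

variable {Z : Type*} {g : Z → Z} {S : ℕ → Z → ℝ} {Y K : Set Z}

theorem apply_zero (hS : IsAddCocycle g S) (z : Z) : S 0 z = 0 := by
  simpa using hS 0 0 z

theorem neg (hS : IsAddCocycle g S) : IsAddCocycle g (fun n z => -S n z) := by
  intro m n z
  simp only [hS m n z]
  ring

theorem sub_natCast_mul (hS : IsAddCocycle g S) (β : ℝ) :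
    IsAddCocycle g (fun n z => S n z - n * β) := by
  intro m n z
  simp only [hS m n z]
  push_cast
  ring

theorem natCast_mul_le (hS : IsAddCocycle g S) (hg : MapsTo g Y Y) {c : ℝ}
    (hc : ∀ z ∈ Y, c ≤ S 1 z) (n : ℕ) : ∀ z ∈ Y, n * c ≤ S n z := by
  induction n with
  | zero => simp [hS.apply_zero]
  | succ n ih =>
    intro z hz
    rw [hS n 1 z]
    push_cast
    linarith [ih z hz, hc _ (hg.iterate n hz)]

theorem le_of_forall_exists_le_neg (hS : IsAddCocycle g S) (hg : MapsTo g Y Y) {n : ℕ}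
    (hn : 0 < n) {δ C : ℝ} (hδ : 0 < δ) (hdrop : ∀ z ∈ Y, ∃ m ≤ n, S m z ≤ -δ)
    (hC : ∀ m ≤ n, ∀ z ∈ Y, S m z ≤ C) (N : ℕ) : ∀ z ∈ Y, S N z ≤ C - δ * (N - n) / n := by
  have hnR : (0 : ℝ) < n := by exact_mod_cast hn
  induction N using Nat.strong_induction_on with
  | _ N ih =>
  intro z hz
  rcases le_or_gt N n with hNn | hNn
  · have : δ * (N - n) / n ≤ 0 := div_nonpos_of_nonpos_of_nonneg
      (mul_nonpos_of_nonneg_of_nonpos hδ.le (sub_nonpos.2 (by exact_mod_cast hNn))) hnR.le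
    linarith [hC N hNn z hz]
  · obtain ⟨m, hmn, hm⟩ := hdrop z hz
    have hm0 : m ≠ 0 := by
      rintro rfl
      linarith [hS.apply_zero z]
    obtain ⟨k, rfl⟩ : ∃ k, N = m + k := ⟨N - m, by omega⟩
    have hk := ih k (by omega) _ (hg.iterate m hz)
    have hδm : δ * m / n ≤ δ := by
      rw [div_le_iff₀ hnR]
      gcongr
    have hsplit : δ * ((m + k : ℕ) - n : ℝ) / n = δ * m / n + δ * (k - n) / n := by
      push_cast
      ring
    rw [hS m k z, hsplit]
    linarith

variable [TopologicalSpace Z]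

theorem exists_forall_le_nonneg (hS : IsAddCocycle g S) (hSc : ∀ n, Continuous (S n))
    (hg : MapsTo g Y Y) (hK : IsCompact K) (hKY : K ⊆ Y)
    (hrep : ∀ z ∈ Y, ∃ w ∈ K, ∀ n, S n w = S n z) (hpos : ∀ n, ∃ x ∈ K, 0 ≤ S n x) (n : ℕ) :
    ∃ z ∈ K, ∀ m ≤ n, 0 ≤ S m z := by
  by_contra! hneg
  obtain ⟨x₀, hx₀, -⟩ := hpos 0
  obtain ⟨δ, hδ, hdrop⟩ := exists_pos_forall_exists_le_neg hSc hK ⟨x₀, hx₀⟩ hrep hneg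
  have hn : 0 < n := by
    obtain ⟨m, hm, hlt⟩ := hneg x₀ hx₀
    rcases m.eq_zero_or_pos with rfl | hm0
    · linarith [hS.apply_zero x₀]
    · omega
  obtain ⟨C, hC⟩ : BddAbove (⋃ m ∈ Iic n, S m '' Y) :=
    (finite_Iic n).bddAbove_biUnion.2 fun m _ => bddAbove_image_of_reps hSc hK hKY hrep m
  have hC' : ∀ m ≤ n, ∀ z ∈ Y, S m z ≤ C := fun m hm z hz =>
    hC (mem_biUnion (mem_Iic.2 hm) ⟨z, hz, rfl⟩)
  obtain ⟨N, hN⟩ := exists_nat_gt (n + n * C / δ)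
  obtain ⟨x, hxK, hx⟩ := hpos N
  have hbound := hS.le_of_forall_exists_le_neg hg hn hδ hdrop hC' N x (hKY hxK)
  have hnR : (0 : ℝ) < n := by exact_mod_cast hn
  have : C < δ * (N - n) / n := by
    rw [lt_div_iff₀ hnR]
    have := (div_lt_iff₀' hδ).1 (show n * C / δ < N - n by linarith)
    linarith
  linarith

theorem exists_forall_nonneg (hS : IsAddCocycle g S) (hSc : ∀ n, Continuous (S n))
    (hg : MapsTo g Y Y) (hK : IsCompact K) (hKY : K ⊆ Y)
    (hrep : ∀ z ∈ Y, ∃ w ∈ K, ∀ n, S n w = S n z) (hpos : ∀ n, ∃ x ∈ K, 0 ≤ S n x) :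
    ∃ z ∈ K, ∀ n, 0 ≤ S n z := by
  obtain ⟨z, hzK, hz⟩ := hK.inter_iInter_nonempty (fun n => {z | 0 ≤ S n z})
    (fun n => isClosed_le continuous_const (hSc n)) fun u => by
      obtain ⟨z, hzK, hz⟩ := hS.exists_forall_le_nonneg hSc hg hK hKY hrep hpos (u.sup id)
      exact ⟨z, hzK, mem_iInter₂.2 fun m hm => hz m (Finset.le_sup (f := id) hm)⟩
  exact ⟨z, hzK, mem_iInter.1 hz⟩

theorem exists_tendsto_and_eventually_div_lt (hS : IsAddCocycle g S)
    (hSc : ∀ n, Continuous (S n)) (hg : MapsTo g Y Y) (hK : IsCompact K) (hKY : K ⊆ Y)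
    (hrep : ∀ z ∈ Y, ∃ w ∈ K, ∀ n, S n w = S n z) (hKne : K.Nonempty) :
    ∃ β, (∃ z ∈ K, Tendsto (fun n : ℕ => S n z / n) atTop (𝓝 β)) ∧
      ∀ ε > 0, ∀ᶠ n in atTop, ∀ z ∈ Y, S n z / n < β + ε := by
  set M : ℕ → ℝ := fun n => sSup (S n '' Y)
  have hle : ∀ n, ∀ z ∈ Y, S n z ≤ M n := fun n z hz =>
    le_csSup (bddAbove_image_of_reps hSc hK hKY hrep n) ⟨z, hz, rfl⟩
  have hmax : ∀ n, ∃ x ∈ K, S n x = M n := fun n => by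
    obtain ⟨x, hx, hxM⟩ := hK.exists_sSup_image_eq hKne (hSc n).continuousOn
    exact ⟨x, hx, by rw [← hxM, image_eq_of_reps hKY hrep]⟩
  have hsub : Subadditive M := fun m n => by
    obtain ⟨x, hxK, hx⟩ := hmax (m + n)
    rw [← hx, hS m n x]
    exact add_le_add (hle m x (hKY hxK)) (hle n _ (hg.iterate m (hKY hxK)))
  have hbdd : BddBelow (range fun n => M n / n) := by
    obtain ⟨c, hc⟩ := bddBelow_image_of_reps hSc hK hKY hrep 1
    obtain ⟨x₀, hx₀⟩ := hKne
    refine ⟨min c 0, forall_mem_range.2 fun n => ?_⟩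
    rcases n.eq_zero_or_pos with rfl | hn
    · simp
    · have hmul := hS.natCast_mul_le hg (fun z hz => hc ⟨z, hz, rfl⟩) n x₀ (hKY hx₀)
      have : c ≤ M n / n := (le_div_iff₀ (by exact_mod_cast hn)).2 <|
        (mul_comm c n ▸ hmul).trans (hle n x₀ (hKY hx₀))
      exact (min_le_left c 0).trans this
  set β := hsub.lim
  have hM : Tendsto (fun n => M n / n) atTop (𝓝 β) := hsub.tendsto_lim hbdd
  have hβM : ∀ n, ∃ x ∈ K, 0 ≤ S n x - n * β := fun n => by
    obtain ⟨x, hxK, hx⟩ := hmax n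
    refine ⟨x, hxK, ?_⟩
    rcases n.eq_zero_or_pos with rfl | hn
    · simp [hS.apply_zero]
    · have hnR : (0 : ℝ) < n := by exact_mod_cast hn
      have := (le_div_iff₀ hnR).1 (hsub.lim_le_div hbdd hn.ne')
      linarith
  obtain ⟨z, hzK, hz⟩ := (hS.sub_natCast_mul β).exists_forall_nonneg
    (fun n => (hSc n).sub continuous_const) hg hK hKY
    (fun z hz => (hrep z hz).imp fun w ⟨hw, hwz⟩ => ⟨hw, fun n => by rw [hwz n]⟩) hβM
  refine ⟨β, ⟨z, hzK, ?_⟩, fun ε hε => ?_⟩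
  · refine tendsto_of_tendsto_of_tendsto_of_le_of_le' tendsto_const_nhds hM ?_
      (Eventually.of_forall fun n => div_le_div_of_nonneg_right (hle n z (hKY hzK)) n.cast_nonneg)
    filter_upwards [eventually_gt_atTop 0] with n hn
    rw [le_div_iff₀ (by exact_mod_cast hn)]
    linarith [hz n]
  · filter_upwards [hM.eventually (gt_mem_nhds (lt_add_of_pos_right β hε))] with n hn z hz
    exact (div_le_div_of_nonneg_right (hle n z hz) n.cast_nonneg).trans_lt hn

theorem tendstoUniformlyOn_div (hS : IsAddCocycle g S) (hSc : ∀ n, Continuous (S n))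
    (hg : MapsTo g Y Y) (hK : IsCompact K) (hKY : K ⊆ Y)
    (hrep : ∀ z ∈ Y, ∃ w ∈ K, ∀ n, S n w = S n z) (hKne : K.Nonempty) {α : ℝ}
    (hα : ∀ z ∈ Y, ∀ r, Tendsto (fun n : ℕ => S n z / n) atTop (𝓝 r) → r = α) :
    TendstoUniformlyOn (fun n z => S n z / n) (fun _ => α) atTop Y := by
  obtain ⟨β, ⟨z, hzK, hz⟩, hup⟩ :=
    hS.exists_tendsto_and_eventually_div_lt hSc hg hK hKY hrep hKne
  obtain ⟨β', ⟨z', hz'K, hz'⟩, hlow⟩ := hS.neg.exists_tendsto_and_eventually_div_lt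
    (fun n => (hSc n).neg) hg hK hKY
    (fun z hz => (hrep z hz).imp fun w ⟨hw, hwz⟩ => ⟨hw, fun n => by rw [hwz n]⟩) hKne
  have hβ : β = α := hα z (hKY hzK) β hz
  have hβ' : -β' = α := hα z' (hKY hz'K) _ (by simpa only [neg_div, neg_neg] using hz'.neg)
  refine Metric.tendstoUniformlyOn_iff.2 fun ε hε => ?_
  filter_upwards [hup ε hε, hlow ε hε] with n hn hn' z hz
  have h₁ := hn z hz
  have h₂ := hn' z hz
  rw [neg_div] at h₂
  rw [Real.dist_eq, abs_sub_lt_iff]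
  constructor <;> linarith

end IsAddCocycle

def displacement (F : 𝒜 → 𝒜) (n : ℕ) (z : 𝒜) : ℝ := (F^[n] z).1 - z.1

theorem isAddCocycle_displacement (F : 𝒜 → 𝒜) : IsAddCocycle F (displacement F) := by
  intro m n z
  simp only [displacement, add_comm m n, Function.iterate_add_apply]
  ring

theorem continuous_displacement {F : 𝒜 → 𝒜} (hF : Continuous F) (n : ℕ) :
    Continuous (displacement F n) :=
  (continuous_fst.comp (hF.iterate n)).sub continuous_fst

theorem T_iterate (m : ℕ) (z : 𝒜) : T^[m] z = (z.1 + m, z.2) := by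
  induction m generalizing z with
  | zero => simp
  | succ m ih =>
    rw [Function.iterate_succ_apply', ih]
    simp only [T, Nat.cast_succ, add_assoc]

theorem iterate_add_intCast {F : 𝒜 → 𝒜} (hFT : ∀ z, F (T z) = T (F z)) (n : ℕ) (k : ℤ)
    (z : 𝒜) : F^[n] (z.1 + k, z.2) = ((F^[n] z).1 + k, (F^[n] z).2) := by
  have hcomm (m : ℕ) : Function.Commute F^[n] T^[m] :=
    Function.Commute.iterate_iterate (fun z => hFT z) n m
  obtain ⟨m, rfl | rfl⟩ := k.eq_nat_or_neg
  · simpa [T_iterate] using hcomm m z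
  · have h := hcomm m (z.1 - m, z.2)
    simp only [T_iterate, sub_add_cancel] at h
    rw [h]
    push_cast
    ring_nf

theorem displacement_add_intCast {F : 𝒜 → 𝒜} (hFT : ∀ z, F (T z) = T (F z)) (n : ℕ) (k : ℤ)
    (z : 𝒜) : displacement F n (z.1 + k, z.2) = displacement F n z := by
  simp only [displacement, iterate_add_intCast hFT]
  ring

theorem cov_add_intCast (z : 𝒜) (k : ℤ) : cov (z.1 + k, z.2) = cov z := by
  simp [cov]

theorem exists_add_intCast_mem_Icc (x : ℝ) : ∃ k : ℤ, x + k ∈ Icc (0 : ℝ) 1 :=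
  ⟨-⌊x⌋, by
    rw [Int.cast_neg, ← sub_eq_add_neg]
    exact ⟨sub_nonneg.2 (Int.floor_le x), by linarith [Int.lt_floor_add_one x]⟩⟩

theorem continuous_cov : Continuous cov :=
  ((AddCircle.continuous_mk' 1).comp continuous_fst).prodMk continuous_snd

/-- If the rotation set of a compact invariant set `X` is the singleton `{α}`, then
every point of `X` has well-defined rotation number `α`, and the convergence of the
displacement averages to `α` is uniform over lifts of points of `X`. -/
theorem stmt_5 (f : Ann ≃ₜ Ann) (F : 𝒜 ≃ₜ 𝒜)
    (hlift : ∀ z : 𝒜, cov (F z) = f (cov z)) (hFT : ∀ z, F (T z) = T (F z))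
    (X : Set Ann) (hXc : IsCompact X) (hXf : f '' X = X) (α : ℝ)
    (hsingle : {r : ℝ | ∃ zt : 𝒜, cov zt ∈ X ∧
        Tendsto (fun n : ℕ => (((⇑F)^[n] zt).1 - zt.1) / (n:ℝ)) atTop (𝓝 r)} = {α}) :
    ∀ ε > 0, ∃ N : ℕ, ∀ n ≥ N, ∀ zt : 𝒜, cov zt ∈ X →
      |(((⇑F)^[n] zt).1 - zt.1) / (n:ℝ) - α| < ε := by
  set Y := cov ⁻¹' X
  set K := Y ∩ Prod.fst ⁻¹' Icc 0 1
  have hK : IsCompact K := by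
    refine IsCompact.inter_left ?_ (hXc.isClosed.preimage continuous_cov)
    rw [← prod_univ]
    exact isCompact_Icc.prod isCompact_univ
  have hg : MapsTo F Y Y := fun z hz => by
    change cov (F z) ∈ X
    rw [hlift, ← hXf]
    exact mem_image_of_mem f hz
  have hrep : ∀ z ∈ Y, ∃ w ∈ K, ∀ n, displacement F n w = displacement F n z := fun z hz => by
    obtain ⟨k, hk⟩ := exists_add_intCast_mem_Icc z.1
    exact ⟨(z.1 + k, z.2), ⟨by simpa only [Y, mem_preimage, cov_add_intCast] using hz, hk⟩,
      fun n => displacement_add_intCast hFT n k z⟩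
  obtain ⟨z₀, hz₀, -⟩ : α ∈ {r : ℝ | ∃ zt : 𝒜, cov zt ∈ X ∧
      Tendsto (fun n : ℕ => (((⇑F)^[n] zt).1 - zt.1) / (n:ℝ)) atTop (𝓝 r)} := hsingle ▸ rfl
  obtain ⟨w₀, hw₀, -⟩ := hrep z₀ hz₀
  have hunif := (isAddCocycle_displacement F).tendstoUniformlyOn_div
    (continuous_displacement F.continuous) hg hK inter_subset_left hrep ⟨w₀, hw₀⟩
    fun z hz r hr => hsingle.subset ⟨z, hz, hr⟩
  intro ε hε
  obtain ⟨N, hN⟩ := eventually_atTop.1 (Metric.tendstoUniformlyOn_iff.1 hunif ε hε)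
  exact ⟨N, fun n hn zt hzt => by
    simpa [displacement, Real.dist_eq, abs_sub_comm] using hN n hn zt hzt⟩
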